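/- arXiv:1505.07964 — 2 statements merged into one kernel-verified Lean document; each statement's English description precedes it below -/
import Mathlib

section
/- In the projective model structure on Ch₊(R), a chain map i is a trivial cofibration if and only if i is injective and its cokernel is a strongly projective chain complex, meaning that for every chain map c : coker(i) → C and every chain map p : D → C that is surjective in strictly positive degrees, there exists a chain map ℓ : coker(i) → D with p ∘ ℓ = c. -/
/-!
Strongly projective complexes are exactly the degreewise projective contractible ones. Lifting
`𝟙 K` through the path complex `K_k ⊕ K_{k+1} → K` yields a contraction, and lifting against
maps of disks `M → M` yields projectivity of each `K_n`. Conversely, given a contraction `h` and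
projective `K_n`, lift each `h ≫ c` degreewise to `t` through `p`; the null-homotopic map
`dt + td` is then a chain map lifting `(dh + hd) ≫ c = c`. A degreewise projective complex is
contractible iff it is acyclic (it is a projective resolution of `0`), and for injective `i` the
long exact homology sequence shows that `i` is a quasi-isomorphism iff `coker i` is acyclic.
-/

open CategoryTheory Limits

universe u

/-- A non-negatively graded chain complex `K` is *strongly projective* if for every chain map
`c : K → C` and every chain map `p : D → C` that is surjective in strictly positive degrees,
there is a chain map `ℓ : K → D` with `ℓ ≫ p = c`. -/
def StronglyProjectiveComplex {R : Type u} [Ring R] (K : ChainComplex (ModuleCat.{u} R) ℕ) :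
    Prop :=
  ∀ (C D : ChainComplex (ModuleCat.{u} R) ℕ) (c : K ⟶ C) (p : D ⟶ C),
    (∀ n : ℕ, 0 < n → Function.Surjective (p.f n)) → ∃ ℓ : K ⟶ D, ℓ ≫ p = c

namespace HomologicalComplex

variable {ι V : Type*} [Category V] {c : ComplexShape ι}

lemma acyclic_of_homotopy_id_zero [Abelian V] {K : HomologicalComplex V c}
    (H : Homotopy (𝟙 K) 0) : K.Acyclic := fun i ↦ by
  rw [exactAt_iff_isZero_homology, IsZero.iff_id_eq_zero, ← homologyMap_id,
    H.homologyMap_eq, homologyMap_zero]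

lemma exists_lift_of_homotopy_id_zero [Preadditive V] {K L M : HomologicalComplex V c}
    (H : Homotopy (𝟙 K) 0) (hK : ∀ i, Projective (K.X i)) (g : K ⟶ L) (p : M ⟶ L)
    (hp : ∀ i j, c.Rel j i → Epi (p.f j)) : ∃ ℓ : K ⟶ M, ℓ ≫ p = g := by
  have lift (i j : ι) : ∃ t : K.X i ⟶ M.X j, t ≫ p.f j = H.hom i j ≫ g.f j := by
    by_cases hij : c.Rel j i
    · have := hp i j hij
      exact ⟨Projective.factorThru _ (p.f j), Projective.factorThru_comp _ _⟩
    · exact ⟨0, by rw [H.zero i j hij, zero_comp, zero_comp]⟩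
  choose t ht using lift
  have id_eq : 𝟙 K = Homotopy.nullHomotopicMap H.hom := by
    ext i
    exact (H.comm i).trans (add_zero _)
  refine ⟨Homotopy.nullHomotopicMap t, ?_⟩
  simp only [Homotopy.nullHomotopicMap_comp, ht]
  rw [← Homotopy.nullHomotopicMap_comp, ← id_eq, Category.id_comp]

lemma quasiIso_iff_acyclic_cokernel [Abelian V] {K L : HomologicalComplex V c} (φ : K ⟶ L)
    [Mono φ] : QuasiIso φ ↔ (cokernel φ).Acyclic := by
  let S := ShortComplex.mk φ (cokernel.π φ) (cokernel.condition φ)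
  have hS : S.ShortExact := { exact := S.exact_of_g_is_cokernel (cokernelIsCokernel φ) }
  refine ⟨fun _ ↦ hS.acyclic_X₃ inferInstance, fun hC ↦ ?_⟩
  rw [quasiIso_iff]
  intro j
  rw [quasiIsoAt_iff_isIso_homologyMap]
  have : Epi (homologyMap φ j) :=
    (hS.homology_exact₂ j).epi_f ((hC j).isZero_homology.eq_of_tgt _ _)
  have : Mono (homologyMap φ j) := by
    by_cases hj : ∃ i, c.Rel i j
    · obtain ⟨i, hij⟩ := hj
      exact (hS.homology_exact₁ i j hij).mono_g ((hC i).isZero_homology.eq_of_src _ _)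
    · exact mono_homologyMap_of_mono_of_not_rel φ j (not_exists.1 hj)
  exact isIso_of_mono_of_epi _

end HomologicalComplex

namespace ChainComplex

variable {V : Type*} [Category V]

open ZeroObject in
lemma nonempty_homotopy_id_zero_of_acyclic [Abelian V] {K : ChainComplex V ℕ}
    (hK : ∀ n, Projective (K.X n)) (hacyc : K.Acyclic) : Nonempty (Homotopy (𝟙 K) 0) := by
  have : QuasiIso (0 : K ⟶ (single₀ V).obj 0) := by
    rw [quasiIso_iff]
    intro n
    rw [quasiIsoAt_iff_exactAt _ _ (hacyc n)]
    exact HomologicalComplex.acyclic_of_isZero _ ((single₀ V).map_isZero (isZero_zero V)) n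
  let P : ProjectiveResolution (0 : V) := { complex := K, projective := hK, π := 0 }
  exact ⟨ProjectiveResolution.liftHomotopyZero (P := P) (Q := P) (𝟙 K) (by simp [P])⟩

section PathComplex

variable [Preadditive V] [HasBinaryBiproducts V] (K : ChainComplex V ℕ)

/-- A section of `pathComplexπ` is the same as a contraction of `K`: its second components are
the homotopy `K_k ⟶ K_{k+1}`. -/
noncomputable def pathComplex : ChainComplex V ℕ :=
  of (fun k ↦ K.X k ⊞ K.X (k + 1))
    (fun k ↦ biprod.lift (biprod.fst ≫ K.d (k + 1) k)
      (biprod.fst - biprod.snd ≫ K.d (k + 1 + 1) (k + 1)))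
    (fun k ↦ by ext <;> simp)

namespace pathComplex

noncomputable def fst (k : ℕ) : K.pathComplex.X k ⟶ K.X k := biprod.fst

noncomputable def snd (k : ℕ) : K.pathComplex.X k ⟶ K.X (k + 1) := biprod.snd

@[simp]
lemma d_fst (k : ℕ) :
    K.pathComplex.d (k + 1) k ≫ fst K k = fst K (k + 1) ≫ K.d (k + 1) k := by
  simp only [pathComplex, of_d]
  exact biprod.lift_fst _ _

lemma d_snd (k : ℕ) : K.pathComplex.d (k + 1) k ≫ snd K k =
    fst K (k + 1) - snd K (k + 1) ≫ K.d (k + 1 + 1) (k + 1) := by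
  simp only [pathComplex, of_d]
  exact biprod.lift_snd _ _

end pathComplex

open pathComplex in
/-- Taking `snd ≫ d` rather than `fst` in degree `0` forces `d h₀ = 𝟙` on a section;
surjectivity is only needed in positive degrees. -/
noncomputable def pathComplexπ : K.pathComplex ⟶ K where
  f
    | 0 => snd K 0 ≫ K.d 1 0
    | k + 1 => fst K (k + 1)
  comm' := by
    rintro _ (_ | k) rfl
    · rw [← Category.assoc, d_snd]
      simp
    · simp

lemma pathComplexπ_f_succ (k : ℕ) : K.pathComplexπ.f (k + 1) = pathComplex.fst K (k + 1) := rfl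

variable {K}

noncomputable def homotopyIdZeroOfSection {ℓ : K ⟶ K.pathComplex}
    (hℓ : ℓ ≫ K.pathComplexπ = 𝟙 K) : Homotopy (𝟙 K) 0 where
  hom i j :=
    if h : i + 1 = j then ℓ.f i ≫ pathComplex.snd K i ≫ eqToHom (congrArg K.X h) else 0
  zero i j hij := dif_neg hij
  comm := by
    have hℓ_f (k : ℕ) : ℓ.f k ≫ K.pathComplexπ.f k = 𝟙 _ := by
      rw [← HomologicalComplex.comp_f, hℓ, HomologicalComplex.id_f]
    rintro (_ | k)
    · rw [Homotopy.dNext_zero_chainComplex, Homotopy.prevD_chainComplex, dif_pos rfl,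
        eqToHom_refl, Category.comp_id, HomologicalComplex.zero_f, zero_add, add_zero,
        Category.assoc]
      exact (hℓ_f 0).symm
    · rw [Homotopy.dNext_succ_chainComplex, Homotopy.prevD_chainComplex, dif_pos rfl, dif_pos rfl,
        eqToHom_refl, eqToHom_refl, Category.comp_id, Category.comp_id, HomologicalComplex.zero_f,
        add_zero]
      have hcomm := ℓ.comm_assoc (k + 1) k (pathComplex.snd K k)
      rw [pathComplex.d_snd, Preadditive.comp_sub, ← pathComplexπ_f_succ, hℓ_f] at hcomm
      simp only [HomologicalComplex.id_f, Category.assoc, ← hcomm, sub_add_cancel]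

end PathComplex

section DiskAt

variable [HasZeroMorphisms V] (n : ℕ)

/-- The disk `M → M` in degrees `n + 1` and `n`, padded with `M` (and zero differentials) in all
other degrees, so that chain maps into it are easy to write down. -/
noncomputable abbrev diskAt (M : V) : ChainComplex V ℕ where
  X _ := M
  d i j := if i = n + 1 ∧ j = n then 𝟙 M else 0
  shape i j hij := if_neg fun h ↦ hij (by simp [h.1, h.2])
  d_comp_d' i j k _ _ := by
    split_ifs <;> first | omega | simp

variable {n}

noncomputable def toDiskAt {K : ChainComplex V ℕ} {M : V} (g : K.X n ⟶ M) : K ⟶ diskAt n M :=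
  ofHom (fun k ↦ if h : k = n then (K.XIsoOfEq h).hom ≫ g else K.d k n ≫ g) fun k ↦ by
    by_cases hk : k = n
    · subst hk
      simp
    · simp [hk]

@[simp]
lemma toDiskAt_f_self {K : ChainComplex V ℕ} {M : V} (g : K.X n ⟶ M) :
    (toDiskAt g).f n = g := by
  simp [toDiskAt]

variable (n) in
noncomputable def diskAtMap {M N : V} (e : M ⟶ N) : diskAt n M ⟶ diskAt n N :=
  ofHom (fun _ ↦ e) fun k ↦ by
    dsimp
    split_ifs <;> simp

@[simp]
lemma diskAtMap_f {M N : V} (e : M ⟶ N) (k : ℕ) : (diskAtMap n e).f k = e := rfl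

end DiskAt

end ChainComplex

namespace StronglyProjectiveComplex

open ChainComplex

variable {R : Type u} [Ring R] {K : ChainComplex (ModuleCat.{u} R) ℕ}

lemma projective_X (hK : StronglyProjectiveComplex K) (n : ℕ) : Projective (K.X n) where
  factors {W E} g e he := by
    have he' := (ModuleCat.epi_iff_surjective e).1 he
    obtain ⟨ℓ, hℓ⟩ := hK _ _ (toDiskAt g) (diskAtMap n e) fun _ _ ↦ he'
    exact ⟨ℓ.f n, by simpa using congrArg (·.f n) hℓ⟩

lemma nonempty_homotopy_id_zero (hK : StronglyProjectiveComplex K) :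
    Nonempty (Homotopy (𝟙 K) 0) := by
  have hπ : ∀ n, 0 < n → Function.Surjective (K.pathComplexπ.f n) := by
    rintro (_ | k) hk
    · omega
    · rw [← ModuleCat.epi_iff_surjective, pathComplexπ_f_succ, pathComplex.fst]
      exact inferInstanceAs (Epi (biprod.fst : K.X (k + 1) ⊞ K.X (k + 1 + 1) ⟶ _))
  obtain ⟨ℓ, hℓ⟩ := hK _ _ (𝟙 K) K.pathComplexπ hπ
  exact ⟨homotopyIdZeroOfSection hℓ⟩

end StronglyProjectiveComplex

theorem stronglyProjectiveComplex_iff {R : Type u} [Ring R]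
    {K : ChainComplex (ModuleCat.{u} R) ℕ} :
    StronglyProjectiveComplex K ↔ (∀ n, Projective (K.X n)) ∧ K.Acyclic := by
  refine ⟨fun hK ↦ ⟨hK.projective_X,
    HomologicalComplex.acyclic_of_homotopy_id_zero hK.nonempty_homotopy_id_zero.some⟩, ?_⟩
  rintro ⟨hP, hA⟩ C D c p hp
  refine HomologicalComplex.exists_lift_of_homotopy_id_zero
    (ChainComplex.nonempty_homotopy_id_zero_of_acyclic hP hA).some hP c p fun i j hij ↦ ?_
  rw [ModuleCat.epi_iff_surjective]
  exact hp j (hij ▸ i.succ_pos)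

/-- In the projective model structure on `Ch₊(R)` (weak equivalences the
quasi-isomorphisms, fibrations the maps surjective in strictly positive degrees, cofibrations
the injective maps with degree-wise projective cokernel), a chain map `i` is a trivial
cofibration if and only if `i` is injective and its cokernel is a strongly projective chain
complex. -/
theorem trivial_cofibrations_are_injections_with_strongly_projective_cokernel
    (R : Type u) [Ring R] {X Y : ChainComplex (ModuleCat.{u} R) ℕ} (i : X ⟶ Y) :
    ((∀ n : ℕ, Function.Injective (i.f n)) ∧
        (∀ n : ℕ, Projective (cokernel (i.f n))) ∧ QuasiIso i) ↔
      ((∀ n : ℕ, Function.Injective (i.f n)) ∧ StronglyProjectiveComplex (cokernel i)) := by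
  refine and_congr_right fun hinj ↦ ?_
  have : Mono i := HomologicalComplex.mono_of_mono_f i fun n ↦
    (ModuleCat.mono_iff_injective _).2 (hinj n)
  have cokernelXIso (n : ℕ) : (cokernel i).X n ≅ cokernel (i.f n) :=
    PreservesCokernel.iso (HomologicalComplex.eval _ _ n) i
  rw [stronglyProjectiveComplex_iff, HomologicalComplex.quasiIso_iff_acyclic_cokernel]
  exact and_congr_left' <| forall_congr' fun n ↦
    ⟨Projective.of_iso (cokernelXIso n).symm, Projective.of_iso (cokernelXIso n)⟩
end

section
/- Let T be a differential graded commutative algebra, n ≥ 1, and φ : S(S^{n−1}) → T a DG algebra morphism from the free algebra on the (n−1)-sphere complex, determined by the cycle κ = φ(1_{n−1}) ∈ ker d_T of degree n−1. Then the pushout of the generating cofibration ψ_n = S(i_n) : S(S^{n−1}) → S(D^n) along φ is the inclusion T → T ⊗ S(S^n) into the algebra obtained by freely adjoining a degree-n generator a with differential d(a) = κ; in particular, every pushout of a generating cofibration ψ_n is a relative Sullivan algebra. -/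
open CategoryTheory Limits

universe u

/-- A non-negatively graded, graded-commutative algebra over a commutative ring `k`,
presented via an internal grading by submodules. -/
structure GrAlg (k : Type u) [CommRing k] where
  A : Type u
  [ring : Ring A]
  [alg : Algebra k A]
  grading : ℕ → Submodule k A
  decomp : DirectSum.Decomposition grading
  one_mem : (1 : A) ∈ grading 0
  mul_mem : ∀ {m n : ℕ} {a b : A}, a ∈ grading m → b ∈ grading n → a * b ∈ grading (m + n)
  scomm : ∀ {m n : ℕ} {a b : A}, a ∈ grading m → b ∈ grading n →
    a * b = ((-1 : ℤ) ^ (m * n)) • (b * a)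

attribute [instance] GrAlg.ring GrAlg.alg

/-- A differential (non-negatively) graded commutative algebra over `k`:
a graded-commutative algebra together with a degree `-1` square-zero derivation. -/
structure DGA (k : Type u) [CommRing k] extends GrAlg k where
  d : A →ₗ[k] A
  d_mem : ∀ {n : ℕ} {a : A}, a ∈ grading (n + 1) → d a ∈ grading n
  d_zero : ∀ {a : A}, a ∈ grading 0 → d a = 0
  d_sq : ∀ a : A, d (d a) = 0
  leibniz : ∀ {m : ℕ} {a : A} (b : A), a ∈ grading m →
    d (a * b) = d a * b + ((-1 : ℤ) ^ m) • (a * d b)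

/-- Morphisms of differential graded algebras: grade-preserving algebra morphisms
commuting with the differentials. -/
structure DGAHom {k : Type u} [CommRing k] (X Y : DGA k) where
  toAlgHom : X.A →ₐ[k] Y.A
  grade : ∀ {n : ℕ} {a : X.A}, a ∈ X.grading n → toAlgHom a ∈ Y.grading n
  commd : ∀ a : X.A, toAlgHom (X.d a) = Y.d (toAlgHom a)

@[ext]
lemma DGAHom.ext {k : Type u} [CommRing k] {X Y : DGA k} {f g : DGAHom X Y}
    (h : f.toAlgHom = g.toAlgHom) : f = g := by
  cases f; cases g; cases h; rfl

instance DGACat (k : Type u) [CommRing k] : Category (DGA k) where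
  Hom := DGAHom
  id X := ⟨AlgHom.id k X.A, fun h => h, fun _ => rfl⟩
  comp f g := ⟨g.toAlgHom.comp f.toAlgHom, fun h => g.grade (f.grade h), by
    intro a
    simp [AlgHom.comp_apply, f.commd, g.commd]⟩
  id_comp f := by apply DGAHom.ext; exact AlgHom.id_comp f.toAlgHom
  comp_id f := by apply DGAHom.ext; exact AlgHom.comp_id f.toAlgHom
  assoc f g h := by apply DGAHom.ext; rfl

/-- A morphism of DG algebras is surjective in all strictly positive degrees. -/
def posSurj {k : Type u} [CommRing k] {X Y : DGA k} (f : X ⟶ Y) : Prop :=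
  ∀ n : ℕ, 0 < n → ∀ b ∈ Y.grading n, ∃ a ∈ X.grading n, f.toAlgHom a = b

/-- A morphism of DG algebras is a quasi-isomorphism: it induces a bijection on homology
(expressed elementwise on homogeneous cycles). -/
def isQuasiIso {k : Type u} [CommRing k] {X Y : DGA k} (f : X ⟶ Y) : Prop :=
  (∀ (n : ℕ) (b : Y.A), b ∈ Y.grading n → Y.d b = 0 →
      ∃ a ∈ X.grading n, X.d a = 0 ∧ ∃ c ∈ Y.grading (n + 1), f.toAlgHom a - b = Y.d c) ∧
  (∀ (n : ℕ) (a : X.A), a ∈ X.grading n → X.d a = 0 →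
      (∃ c ∈ Y.grading (n + 1), f.toAlgHom a = Y.d c) →
      ∃ e ∈ X.grading (n + 1), X.d e = a)

/-- `f : A ⟶ E` is a relative Sullivan algebra: `E` is free as a graded-commutative
algebra over `A` on a well-ordered family of homogeneous generators, and the differential
is lowering. -/
def IsRelSullivan {k : Type u} [CommRing k] {A E : DGA k} (f : A ⟶ E) : Prop :=
  ∃ (J : Type u) (_ : LinearOrder J) (_ : WellFoundedLT J) (g : J → E.A) (deg : J → ℕ),
    (∀ j : J, g j ∈ E.grading (deg j)) ∧
    (∀ (B : GrAlg k) (p : A.A →ₐ[k] B.A), (∀ (n : ℕ) (a : A.A), a ∈ A.grading n → p a ∈ B.grading n) →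
      ∀ b : J → B.A, (∀ j, b j ∈ B.grading (deg j)) →
        ∃! q : E.A →ₐ[k] B.A,
          (∀ (n : ℕ) (a : E.A), a ∈ E.grading n → q a ∈ B.grading n) ∧
          q.comp f.toAlgHom = p ∧ ∀ j, q (g j) = b j) ∧
    (∀ j : J, E.d (g j) ∈ Algebra.adjoin k (Set.range f.toAlgHom ∪ g '' {i | i < j}))

/-!
Both composites around the square send the generator of `S(S^{n-1})` to `ι κ = d a`, so the
square commutes. Given a cocone `(s, t)` into `V`, freeness of `E` over `T` as a graded algebra
gives a unique graded algebra map `q : E → V` extending `s` with `q a = t(genD)`. The point is that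
`q` commutes with the differentials: `q ∘ d - d ∘ q` is an odd `q`-derivation, so
`e ↦ (q e, (q ∘ d - d ∘ q) e)` is a graded algebra map into the square-zero extension `V ⊕ εV`
with `ε` odd of degree one. It agrees with `e ↦ (q e, 0)` on `T` and on `a`, so freeness forces
the two maps to coincide. Finally, one generator whose differential lies in `T` is a relative
Sullivan algebra.
-/
namespace DirectSum

section Prod

variable {ι R M N : Type*} [DecidableEq ι] [Semiring R] [AddCommMonoid M] [Module R M]
  [AddCommMonoid N] [Module R N] (𝒜 : ι → Submodule R M) (ℬ : ι → Submodule R N)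
  [Decomposition 𝒜] [Decomposition ℬ]

abbrev Decomposition.prod : Decomposition fun i => (𝒜 i).prod (ℬ i) :=
  Decomposition.ofLinearMap _
    (toModule R ι _ (fun i => lof R ι (fun i => (𝒜 i).prod (ℬ i)) i ∘ₗ
        (LinearMap.inl R M N ∘ₗ (𝒜 i).subtype).codRestrict _ fun x => ⟨x.2, zero_mem _⟩) ∘ₗ
      (decomposeLinearEquiv 𝒜).toLinearMap ∘ₗ LinearMap.fst R M N +
     toModule R ι _ (fun i => lof R ι (fun i => (𝒜 i).prod (ℬ i)) i ∘ₗ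
        (LinearMap.inr R M N ∘ₗ (ℬ i).subtype).codRestrict _ fun x => ⟨zero_mem _, x.2⟩) ∘ₗ
      (decomposeLinearEquiv ℬ).toLinearMap ∘ₗ LinearMap.snd R M N)
    (by
      refine LinearMap.prod_ext ?_ ?_ <;> refine LinearMap.ext fun x => ?_
      · induction x using Decomposition.inductionOn 𝒜 with
        | zero => rw [map_zero, map_zero]
        | add x y hx hy => simp_all
        | homogeneous x =>
          simp only [LinearMap.comp_apply, LinearMap.add_apply, LinearMap.inl_apply,
            LinearMap.fst_apply, LinearMap.snd_apply, LinearEquiv.coe_coe,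
            decomposeLinearEquiv_apply, decompose_coe, map_zero, add_zero,
            ← lof_eq_of R, toModule_lof, coeLinearMap_lof, LinearMap.id_apply]
          rfl
      · induction x using Decomposition.inductionOn ℬ with
        | zero => rw [map_zero, map_zero]
        | add x y hx hy => simp_all
        | homogeneous x =>
          simp only [LinearMap.comp_apply, LinearMap.add_apply, LinearMap.inr_apply,
            LinearMap.fst_apply, LinearMap.snd_apply, LinearEquiv.coe_coe,
            decomposeLinearEquiv_apply, decompose_coe, map_zero, zero_add,
            ← lof_eq_of R, toModule_lof, coeLinearMap_lof, LinearMap.id_apply]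
          rfl)
    (by
      refine linearMap_ext _ fun i => LinearMap.ext fun ⟨⟨x, y⟩, hx, hy⟩ => ?_
      simp only [LinearMap.comp_apply, LinearMap.add_apply, coeLinearMap_lof, LinearMap.fst_apply,
        LinearMap.snd_apply, LinearEquiv.coe_coe, decomposeLinearEquiv_apply,
        decompose_of_mem _ hx, decompose_of_mem _ hy, ← lof_eq_of R, toModule_lof]
      rw [← map_add]
      exact congrArg _ (Subtype.ext (Prod.ext (add_zero x) (zero_add y))))

end Prod

end DirectSum

section Shift

variable {R M : Type*} [Semiring R] [AddCommMonoid M] [Module R M] (𝒜 : ℕ → Submodule R M)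

def shiftGrading : ℕ → Submodule R M
  | 0 => ⊥
  | m + 1 => 𝒜 m

@[simp] lemma shiftGrading_zero : shiftGrading 𝒜 0 = ⊥ := rfl

@[simp] lemma shiftGrading_succ (m : ℕ) : shiftGrading 𝒜 (m + 1) = 𝒜 m := rfl

open DirectSum

variable [Decomposition 𝒜]

abbrev DirectSum.Decomposition.shift : Decomposition (shiftGrading 𝒜) :=
  Decomposition.ofLinearMap _
    (toModule R ℕ _ (fun m => lof R ℕ (fun m => shiftGrading 𝒜 m) (m + 1) ∘ₗ
      (LinearEquiv.ofEq _ _ (shiftGrading_succ 𝒜 m).symm).toLinearMap) ∘ₗ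
      (decomposeLinearEquiv 𝒜).toLinearMap)
    (by
      refine LinearMap.ext fun x => ?_
      induction x using Decomposition.inductionOn 𝒜 with
      | zero => simp
      | add x y hx hy => simp_all
      | homogeneous x =>
        simp only [LinearMap.comp_apply, LinearMap.id_apply, LinearEquiv.coe_coe,
          decomposeLinearEquiv_apply, decompose_coe, ← lof_eq_of R, toModule_lof, coeLinearMap_lof,
          LinearEquiv.coe_ofEq_apply])
    (by
      refine linearMap_ext _ fun m => LinearMap.ext fun ⟨x, hx⟩ => ?_
      cases m with
      | zero =>
        rw [show (⟨x, hx⟩ : shiftGrading 𝒜 0) = 0 from Subtype.ext ((Submodule.mem_bot R).mp hx),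
          map_zero, map_zero]
      | succ m =>
        simp only [LinearMap.comp_apply, LinearMap.id_apply, coeLinearMap_lof, LinearEquiv.coe_coe,
          decomposeLinearEquiv_apply, decompose_of_mem 𝒜 (show x ∈ 𝒜 m from hx), ← lof_eq_of R,
          toModule_lof]
        rfl)

end Shift

namespace GrAlg

variable {k : Type u} [CommRing k]

def IsGradedHom {X Y : GrAlg k} (f : X.A →ₐ[k] Y.A) : Prop :=
  ∀ (m : ℕ) (x : X.A), x ∈ X.grading m → f x ∈ Y.grading m

variable (W : GrAlg k)

noncomputable def parityₗ : W.A →ₗ[k] W.A :=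
  letI := W.decomp
  DirectSum.toModule k ℕ W.A (fun m => (-1 : ℤ) ^ m • (W.grading m).subtype) ∘ₗ
    (DirectSum.decomposeLinearEquiv W.grading).toLinearMap

lemma parityₗ_of_mem {m : ℕ} {w : W.A} (hw : w ∈ W.grading m) :
    W.parityₗ w = (-1 : ℤ) ^ m • w := by
  let := W.decomp
  rw [parityₗ, LinearMap.comp_apply, LinearEquiv.coe_coe, DirectSum.decomposeLinearEquiv_apply,
    DirectSum.decompose_of_mem _ hw, ← DirectSum.lof_eq_of k, DirectSum.toModule_lof]
  rfl

lemma parityₗ_mul (v w : W.A) : W.parityₗ (v * w) = W.parityₗ v * W.parityₗ w := by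
  let := W.decomp
  induction v using DirectSum.Decomposition.inductionOn W.grading with
  | zero => simp
  | add v v' hv hv' => simp [add_mul, hv, hv']
  | homogeneous v =>
    induction w using DirectSum.Decomposition.inductionOn W.grading with
    | zero => simp
    | add w w' hw hw' => simp [mul_add, hw, hw']
    | homogeneous w =>
      rw [W.parityₗ_of_mem v.2, W.parityₗ_of_mem w.2, W.parityₗ_of_mem (W.mul_mem v.2 w.2),
        smul_mul_smul_comm, ← pow_add]

noncomputable def parity : W.A →ₐ[k] W.A :=
  AlgHom.ofLinearMap W.parityₗ (by rw [W.parityₗ_of_mem W.one_mem, pow_zero, one_smul])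
    W.parityₗ_mul

lemma parity_of_mem {m : ℕ} {w : W.A} (hw : w ∈ W.grading m) :
    W.parity w = (-1 : ℤ) ^ m • w :=
  W.parityₗ_of_mem hw

lemma parity_mem {m : ℕ} {w : W.A} (hw : w ∈ W.grading m) : W.parity w ∈ W.grading m := by
  rw [W.parity_of_mem hw]
  exact zsmul_mem hw _

/-- `(x, y) : TrivSqZeroExt W.A W.ParityTwist` stands for `x + ε y` with `ε` odd of degree one,
so `ε` anticommutes past odd elements: `w ε = ε (parity w)`. -/
def ParityTwist : Type u := W.A

instance : AddCommGroup W.ParityTwist := inferInstanceAs (AddCommGroup W.A)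

instance : Module k W.ParityTwist := inferInstanceAs (Module k W.A)

noncomputable instance : Module W.A W.ParityTwist :=
  (Module.compHom W.A W.parity.toRingHom : Module W.A W.A)

instance : Module W.Aᵐᵒᵖ W.ParityTwist := inferInstanceAs (Module W.Aᵐᵒᵖ W.A)

instance : SMulCommClass W.A W.Aᵐᵒᵖ W.ParityTwist where
  smul_comm r s x := (mul_assoc (W.parity r) (show W.A from x) s.unop).symm

instance : IsScalarTower k W.A W.ParityTwist where
  smul_assoc c r x := by
    show W.parity (c • r) * (show W.A from x) = c • (W.parity r * (show W.A from x))
    rw [map_smul, smul_mul_assoc]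

instance : IsScalarTower k W.Aᵐᵒᵖ W.ParityTwist := inferInstanceAs (IsScalarTower k W.Aᵐᵒᵖ W.A)

def toParityTwist : W.A ≃ₗ[k] W.ParityTwist := LinearEquiv.refl k W.A

lemma smul_toParityTwist (r x : W.A) : r • W.toParityTwist x = W.toParityTwist (W.parity r * x) :=
  rfl

lemma op_smul_toParityTwist (r x : W.A) :
    MulOpposite.op r • W.toParityTwist x = W.toParityTwist (x * r) :=
  rfl

def twistGrading (m : ℕ) : Submodule k W.ParityTwist := W.grading m

lemma toParityTwist_mem_twistGrading {m : ℕ} {x : W.A} :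
    W.toParityTwist x ∈ W.twistGrading m ↔ x ∈ W.grading m :=
  Iff.rfl

lemma toParityTwist_mem_shiftGrading {m : ℕ} {x : W.A} :
    W.toParityTwist x ∈ shiftGrading W.twistGrading m ↔ x ∈ shiftGrading W.grading m := by
  cases m with
  | zero => simp only [shiftGrading_zero, Submodule.mem_bot, LinearEquiv.map_eq_zero_iff]
  | succ m => exact Iff.rfl

lemma smul_mem_shiftGrading {m n : ℕ} {x : W.A} {y : W.ParityTwist} (hx : x ∈ W.grading m)
    (hy : y ∈ shiftGrading W.twistGrading n) : x • y ∈ shiftGrading W.twistGrading (m + n) := by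
  cases n with
  | zero => rw [(Submodule.mem_bot k).mp hy, smul_zero]; exact zero_mem _
  | succ n =>
    obtain ⟨y, rfl⟩ := W.toParityTwist.surjective y
    rw [smul_toParityTwist]
    exact W.mul_mem (W.parity_mem hx) (W.toParityTwist_mem_twistGrading.mp hy)

lemma op_smul_mem_shiftGrading {m n : ℕ} {x : W.A} {y : W.ParityTwist}
    (hy : y ∈ shiftGrading W.twistGrading m) (hx : x ∈ W.grading n) :
    MulOpposite.op x • y ∈ shiftGrading W.twistGrading (m + n) := by
  cases m with
  | zero => rw [(Submodule.mem_bot k).mp hy, smul_zero]; exact zero_mem _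
  | succ m =>
    obtain ⟨y, rfl⟩ := W.toParityTwist.surjective y
    rw [op_smul_toParityTwist, Nat.add_right_comm]
    exact W.mul_mem (W.toParityTwist_mem_twistGrading.mp hy) hx

lemma smul_eq_zsmul_op_smul {m n : ℕ} {x : W.A} {y : W.ParityTwist} (hx : x ∈ W.grading m)
    (hy : y ∈ shiftGrading W.twistGrading n) :
    x • y = (-1 : ℤ) ^ (m * n) • (MulOpposite.op x • y) := by
  cases n with
  | zero => rw [(Submodule.mem_bot k).mp hy, smul_zero, smul_zero, smul_zero]
  | succ n =>
    obtain ⟨y, rfl⟩ := W.toParityTwist.surjective y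
    rw [smul_toParityTwist, op_smul_toParityTwist, ← map_zsmul, W.parity_of_mem hx,
      smul_mul_assoc, W.scomm hx (W.toParityTwist_mem_twistGrading.mp hy), smul_smul, ← pow_add,
      Nat.mul_succ, Nat.add_comm]

lemma snd_mul_eq_zsmul_snd_mul {m n : ℕ} {p q : TrivSqZeroExt W.A W.ParityTwist}
    (hp₁ : p.fst ∈ W.grading m) (hp₂ : p.snd ∈ shiftGrading W.twistGrading m)
    (hq₁ : q.fst ∈ W.grading n) (hq₂ : q.snd ∈ shiftGrading W.twistGrading n) :
    (p * q).snd = (-1 : ℤ) ^ (m * n) • (q * p).snd := by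
  rw [TrivSqZeroExt.snd_mul, TrivSqZeroExt.snd_mul, W.smul_eq_zsmul_op_smul hp₁ hq₂,
    W.smul_eq_zsmul_op_smul hq₁ hp₂, smul_add, smul_smul, Nat.mul_comm n m, ← pow_add, ← two_mul,
    (even_two_mul _).neg_one_pow, one_smul, add_comm]

open DirectSum in
noncomputable abbrev sqZeroExt : GrAlg k where
  A := TrivSqZeroExt W.A W.ParityTwist
  grading m := (W.grading m).prod (shiftGrading W.twistGrading m)
  decomp :=
    let : Decomposition W.grading := W.decomp
    let : Decomposition W.twistGrading := W.decomp
    let := Decomposition.shift W.twistGrading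
    Decomposition.prod W.grading (shiftGrading W.twistGrading)
  one_mem := ⟨W.one_mem, zero_mem _⟩
  mul_mem hp hq :=
    ⟨W.mul_mem hp.1 hq.1,
      add_mem (W.smul_mem_shiftGrading hp.1 hq.2) (W.op_smul_mem_shiftGrading hp.2 hq.1)⟩
  scomm hp hq :=
    TrivSqZeroExt.ext (W.scomm hp.1 hq.1) (W.snd_mul_eq_zsmul_snd_mul hp.1 hp.2 hq.1 hq.2)

lemma mem_sqZeroExt_grading {m : ℕ} {p : W.sqZeroExt.A} :
    p ∈ W.sqZeroExt.grading m ↔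
      TrivSqZeroExt.fst p ∈ W.grading m ∧ TrivSqZeroExt.snd p ∈ shiftGrading W.twistGrading m :=
  Iff.rfl

variable {W} {X : GrAlg k}

noncomputable def liftSqZeroExt (q : X.A →ₐ[k] W.A) (δ : X.A →ₗ[k] W.A)
    (hδ : ∀ x y, δ (x * y) = δ x * q y + W.parity (q x) * δ y) :
    X.A →ₐ[k] TrivSqZeroExt W.A W.ParityTwist :=
  have hδ_one : δ 1 = 0 := by simpa using hδ 1 1
  AlgHom.ofLinearMap
    { toFun x := TrivSqZeroExt.inl (q x) + TrivSqZeroExt.inr (W.toParityTwist (δ x))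
      map_add' x y := by ext <;> simp [add_add_add_comm]
      map_smul' c x := by ext <;> simp }
    (by ext <;> simp [hδ_one])
    (fun x y => by ext <;> simp [hδ, smul_toParityTwist, op_smul_toParityTwist, add_comm])

@[simp] lemma fst_liftSqZeroExt (q : X.A →ₐ[k] W.A) (δ : X.A →ₗ[k] W.A) (hδ) (x : X.A) :
    (liftSqZeroExt q δ hδ x).fst = q x := by
  simp [liftSqZeroExt]

@[simp] lemma snd_liftSqZeroExt (q : X.A →ₐ[k] W.A) (δ : X.A →ₗ[k] W.A) (hδ) (x : X.A) :
    (liftSqZeroExt q δ hδ x).snd = W.toParityTwist (δ x) := by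
  simp [liftSqZeroExt]

lemma isGradedHom_liftSqZeroExt {q : X.A →ₐ[k] W.A} (hq : IsGradedHom q) {δ : X.A →ₗ[k] W.A}
    (hδ : ∀ x y, δ (x * y) = δ x * q y + W.parity (q x) * δ y)
    (hδ_mem : ∀ (m : ℕ) (x : X.A), x ∈ X.grading m → δ x ∈ shiftGrading W.grading m) :
    IsGradedHom (Y := W.sqZeroExt) (liftSqZeroExt q δ hδ) := fun m x hx =>
  W.mem_sqZeroExt_grading.mpr
    ⟨(fst_liftSqZeroExt q δ hδ x).symm ▸ hq m x hx,
      (snd_liftSqZeroExt q δ hδ x).symm ▸ W.toParityTwist_mem_shiftGrading.mpr (hδ_mem m x hx)⟩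

end GrAlg

namespace DGA

variable {k : Type u} [CommRing k] {E V : DGA k}

def dComm (q : E.A →ₐ[k] V.A) : E.A →ₗ[k] V.A :=
  q.toLinearMap ∘ₗ E.d - V.d ∘ₗ q.toLinearMap

lemma dComm_apply (q : E.A →ₐ[k] V.A) (x : E.A) : dComm q x = q (E.d x) - V.d (q x) :=
  rfl

lemma dComm_mul {q : E.A →ₐ[k] V.A} (hq : GrAlg.IsGradedHom q) (x y : E.A) :
    dComm q (x * y) = dComm q x * q y + V.parity (q x) * dComm q y := by
  let := E.decomp
  induction x using DirectSum.Decomposition.inductionOn E.grading with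
  | zero => simp
  | add x x' hx hx' => simp only [add_mul, map_add, hx, hx']; abel
  | @homogeneous m x =>
    simp only [dComm_apply, E.leibniz y x.2, V.leibniz (q y) (hq m x x.2),
      V.parity_of_mem (hq m x x.2), map_add, map_mul, map_zsmul, sub_mul, mul_sub, smul_mul_assoc]
    abel

lemma dComm_mem {q : E.A →ₐ[k] V.A} (hq : GrAlg.IsGradedHom q) {m : ℕ} {x : E.A}
    (hx : x ∈ E.grading m) : dComm q x ∈ shiftGrading V.grading m := by
  cases m with
  | zero => simp [dComm_apply, E.d_zero hx, V.d_zero (hq 0 x hx)]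
  | succ m => exact sub_mem (hq m _ (E.d_mem hx)) (V.d_mem (hq (m + 1) x hx))

end DGA

open GrAlg

def IsFreeExtension {k : Type u} [CommRing k] {T E : DGA k} (ι : T ⟶ E) (a : E.A) (n : ℕ) :
    Prop :=
  ∀ (B : GrAlg k) (p : T.A →ₐ[k] B.A), IsGradedHom p → ∀ b : B.A, b ∈ B.grading n →
    ∃! q : E.A →ₐ[k] B.A, IsGradedHom q ∧ q.comp ι.toAlgHom = p ∧ q a = b

namespace IsFreeExtension

variable {k : Type u} [CommRing k] {T E : DGA k} {ι : T ⟶ E} {a : E.A} {n : ℕ}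
  (hfree : IsFreeExtension ι a n) (ha : a ∈ E.grading n)
include hfree ha

theorem algHom_ext {B : GrAlg k} {f g : E.A →ₐ[k] B.A} (hf : IsGradedHom f) (hg : IsGradedHom g)
    (hι : f.comp ι.toAlgHom = g.comp ι.toAlgHom) (hfa : f a = g a) : f = g :=
  (hfree B (f.comp ι.toAlgHom) (fun m _ ht => hf m _ (ι.grade ht)) (f a) (hf n a ha)).unique
    ⟨hf, rfl, rfl⟩ ⟨hg, hι.symm, hfa.symm⟩

theorem map_d {V : DGA k} {q : E.A →ₐ[k] V.A} (hq : IsGradedHom q)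
    (hqι : ∀ t, q (E.d (ι.toAlgHom t)) = V.d (q (ι.toAlgHom t))) (hqa : q (E.d a) = V.d (q a))
    (x : E.A) : q (E.d x) = V.d (q x) := by
  have key := hfree.algHom_ext ha
    (isGradedHom_liftSqZeroExt hq (DGA.dComm_mul hq) fun _ _ => DGA.dComm_mem hq)
    (isGradedHom_liftSqZeroExt hq (δ := 0) (by simp) fun _ _ _ => zero_mem _)
    (by ext t <;> simp [DGA.dComm_apply, hqι]) (by ext <;> simp [DGA.dComm_apply, hqa])
  simpa [DGA.dComm_apply, sub_eq_zero] using congrArg TrivSqZeroExt.snd (DFunLike.congr_fun key x)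

theorem existsUnique_hom {κ : T.A} (hda : E.d a = ι.toAlgHom κ) {V : DGA k} (s : T ⟶ V)
    {x : V.A} (hx : x ∈ V.grading n) (hdx : V.d x = s.toAlgHom κ) :
    ∃! u : E ⟶ V, ι ≫ u = s ∧ u.toAlgHom a = x := by
  obtain ⟨q, ⟨hq, hqι, hqa⟩, -⟩ := hfree V.toGrAlg s.toAlgHom (fun _ _ ht => s.grade ht) x hx
  have hq_ι (t : T.A) : q (ι.toAlgHom t) = s.toAlgHom t := AlgHom.congr_fun hqι t
  have hqd := hfree.map_d ha hq (fun t => by rw [← ι.commd, hq_ι, hq_ι, s.commd])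
    (by rw [hda, hq_ι, hqa, hdx])
  refine ⟨⟨q, fun h => hq _ _ h, hqd⟩, ⟨DGAHom.ext hqι, hqa⟩, fun u ⟨hu, hua⟩ => DGAHom.ext ?_⟩
  exact hfree.algHom_ext ha (fun _ _ h => u.grade h) hq
    ((congrArg DGAHom.toAlgHom hu).trans hqι.symm) (hua.trans hqa.symm)

theorem isRelSullivan (hda : E.d a ∈ Algebra.adjoin k (Set.range ι.toAlgHom)) :
    IsRelSullivan ι := by
  refine ⟨PUnit, inferInstance, inferInstance, fun _ => a, fun _ => n, fun _ => ha,
    fun B p hp b hb => ?_, fun _ => Algebra.adjoin_mono Set.subset_union_left hda⟩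
  obtain ⟨q, ⟨hq, hqι, hqa⟩, huniq⟩ := hfree B p hp (b PUnit.unit) (hb PUnit.unit)
  exact ⟨q, ⟨hq, hqι, fun _ => hqa⟩,
    fun q' ⟨hq', hq'ι, hq'a⟩ => huniq q' ⟨hq', hq'ι, hq'a PUnit.unit⟩⟩

end IsFreeExtension

theorem pushout_of_generating_cofibration_general
    {k : Type u} [CommRing k] (n : ℕ)
    -- the free DG algebra `Sph = S(S^{n-1})` on a degree `n-1` cycle generator `genS`:
    (Sph : DGA k) (genS : Sph.A)
    (hSphUP : ∀ (B : DGA k) (b : B.A), b ∈ B.grading (n - 1) → B.d b = 0 →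
      ∃! φ' : Sph ⟶ B, φ'.toAlgHom genS = b)
    -- the free DG algebra `Dsc = S(D^n)` on a degree `n` generator `genD`:
    (Dsc : DGA k) (genD : Dsc.A) (hgenD : genD ∈ Dsc.grading n)
    (hDscUP : ∀ (B : DGA k) (b : B.A), b ∈ B.grading n → ∃! ψ' : Dsc ⟶ B, ψ'.toAlgHom genD = b)
    -- the generating cofibration `ψ = S(i_n)`, sending `genS` to `d genD`:
    (ψ : Sph ⟶ Dsc) (hψ : ψ.toAlgHom genS = Dsc.d genD)
    -- the DG algebra `T` and the morphism `φ` determined by the cycle `κ`: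
    (T : DGA k) (κ : T.A) (hκ : κ ∈ T.grading (n - 1)) (hκd : T.d κ = 0)
    (φ : Sph ⟶ T) (hφ : φ.toAlgHom genS = κ)
    -- the algebra `E = T ⊗ S(S^n)` obtained by freely adjoining `a` with `d a = κ`:
    (E : DGA k) (ι : T ⟶ E) (a : E.A) (ha : a ∈ E.grading n)
    (hda : E.d a = ι.toAlgHom κ)
    (hfree : ∀ (B : GrAlg k) (p : T.A →ₐ[k] B.A),
      (∀ (m : ℕ) (t : T.A), t ∈ T.grading m → p t ∈ B.grading m) →
      ∀ b : B.A, b ∈ B.grading n →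
        ∃! q : E.A →ₐ[k] B.A,
          (∀ (m : ℕ) (e : E.A), e ∈ E.grading m → q e ∈ B.grading m) ∧
          q.comp ι.toAlgHom = p ∧ q a = b)
    -- the morphism `j : S(D^n) → E` sending `genD` to `a`:
    (j : Dsc ⟶ E) (hj : j.toAlgHom genD = a) :
    IsPushout φ ψ ι j ∧ IsRelSullivan ι := by
  have hfree' : IsFreeExtension ι a n := hfree
  have hsq : φ ≫ ι = ψ ≫ j :=
    (hSphUP E _ (ι.grade hκ) (by rw [← ι.commd, hκd, map_zero])).unique
      (congrArg ι.toAlgHom hφ) (by show j.toAlgHom (ψ.toAlgHom genS) = _; rw [hψ, j.commd, hj, hda])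
  have hdesc (c : PushoutCocone φ ψ) :
      ∃! u : E ⟶ c.pt, ι ≫ u = c.inl ∧ u.toAlgHom a = c.inr.toAlgHom genD :=
    hfree'.existsUnique_hom ha hda c.inl (c.inr.grade hgenD) (by
      rw [← c.inr.commd, ← hψ, ← hφ]
      exact (congrArg (fun f => f.toAlgHom genS) c.condition).symm)
  choose u hu huniq using hdesc
  have hinr (c : PushoutCocone φ ψ) {v : E ⟶ c.pt} (hv : v.toAlgHom a = c.inr.toAlgHom genD) :
      j ≫ v = c.inr :=
    (hDscUP c.pt _ (c.inr.grade hgenD)).unique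
      (by show v.toAlgHom (j.toAlgHom genD) = _; rw [hj, hv]) rfl
  exact ⟨IsPushout.of_isColimit (PushoutCocone.IsColimit.mk hsq u (fun c => (hu c).1)
      (fun c => hinr c (hu c).2) fun c m hm₁ hm₂ =>
        huniq c m ⟨hm₁, hj ▸ congrArg (fun f => f.toAlgHom genD) hm₂⟩),
    hfree'.isRelSullivan ha (hda ▸ Algebra.subset_adjoin ⟨κ, rfl⟩)⟩

/-- Let `T` be a differential graded commutative algebra, `n ≥ 1`, and
`φ : S(S^{n-1}) → T` the DG algebra morphism from the free DG algebra `Sph` on one degree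
`n-1` cycle generator, determined by a cycle `κ ∈ ker d_T` of degree `n-1`.  Then the
pushout of the generating cofibration `ψ = S(i_n) : S(S^{n-1}) → S(D^n)` along `φ` is the
inclusion `ι : T → T ⊗ S(S^n)` into the algebra `E` obtained by freely adjoining a degree
`n` generator `a` with `d a = κ`; in particular this pushout is a relative Sullivan
algebra. -/
theorem pushout_of_generating_cofibration
    {k : Type u} [CommRing k] (n : ℕ) (hn : 1 ≤ n)
    -- the free DG algebra `Sph = S(S^{n-1})` on a degree `n-1` cycle generator `genS`:
    (Sph : DGA k) (genS : Sph.A) (hgenS : genS ∈ Sph.grading (n - 1))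
    (hgenSd : Sph.d genS = 0)
    (hSphUP : ∀ (B : DGA k) (b : B.A), b ∈ B.grading (n - 1) → B.d b = 0 →
      ∃! φ' : Sph ⟶ B, φ'.toAlgHom genS = b)
    -- the free DG algebra `Dsc = S(D^n)` on a degree `n` generator `genD`:
    (Dsc : DGA k) (genD : Dsc.A) (hgenD : genD ∈ Dsc.grading n)
    (hDscUP : ∀ (B : DGA k) (b : B.A), b ∈ B.grading n → ∃! ψ' : Dsc ⟶ B, ψ'.toAlgHom genD = b)
    -- the generating cofibration `ψ = S(i_n)`, sending `genS` to `d genD`: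
    (ψ : Sph ⟶ Dsc) (hψ : ψ.toAlgHom genS = Dsc.d genD)
    -- the DG algebra `T` and the morphism `φ` determined by the cycle `κ`:
    (T : DGA k) (κ : T.A) (hκ : κ ∈ T.grading (n - 1)) (hκd : T.d κ = 0)
    (φ : Sph ⟶ T) (hφ : φ.toAlgHom genS = κ)
    -- the algebra `E = T ⊗ S(S^n)` obtained by freely adjoining `a` with `d a = κ`:
    (E : DGA k) (ι : T ⟶ E) (a : E.A) (ha : a ∈ E.grading n)
    (hda : E.d a = ι.toAlgHom κ)
    (hfree : ∀ (B : GrAlg k) (p : T.A →ₐ[k] B.A),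
      (∀ (m : ℕ) (t : T.A), t ∈ T.grading m → p t ∈ B.grading m) →
      ∀ b : B.A, b ∈ B.grading n →
        ∃! q : E.A →ₐ[k] B.A,
          (∀ (m : ℕ) (e : E.A), e ∈ E.grading m → q e ∈ B.grading m) ∧
          q.comp ι.toAlgHom = p ∧ q a = b)
    -- the morphism `j : S(D^n) → E` sending `genD` to `a`:
    (j : Dsc ⟶ E) (hj : j.toAlgHom genD = a) :
    IsPushout φ ψ ι j ∧ IsRelSullivan ι :=
  pushout_of_generating_cofibration_general n Sph genS hSphUP Dsc genD hgenD hDscUP ψ hψ T κ hκ hκd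
    φ hφ E ι a ha hda hfree j hj
end
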